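/- arXiv:1509.08890 — 2 statements merged into one kernel-verified Lean document; each statement's English description precedes it below -/
import Mathlib

section
/- Let G and H be unital associative F-algebras satisfying [x,y,z]=0 identically. Set v1 = g1⊗1, vi = gi⊗hi for 2 ≤ i ≤ 2m'-1, v_{2m'} = g_{2m'}⊗1, and w1 = g1'⊗1, wj = gj'⊗hj' for 2 ≤ j ≤ 2n'-1, w_{2n'} = g_{2n'}'⊗1. Then [v1,...,v_{2m'}][w1,...,w_{2n'}] = [g1,g2]···[g_{2m'-1},g_{2m'}][g1',g2']···[g_{2n'-1}',g_{2n'}'] ⊗ [h2,h3]···[h_{2m'-2},h_{2m'-1}][h2',h3']···[h_{2n'-2}',h_{2n'-1}']. -/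
open scoped TensorProduct

/-- The left-normed commutator `[a, l₁, l₂, …]`. -/
def lnc {A : Type*} [Ring A] (a : A) (l : List A) : A :=
  l.foldl (fun x y => x * y - y * x) a

lemma lnc_concat {A : Type*} [Ring A] (a : A) (l : List A) (x : A) :
    lnc a (l.concat x) = lnc a l * x - x * lnc a l := by
  simp [lnc, List.foldl_concat]

def cprod {M : Type*} [Monoid M] (F : ℕ → M) : ℕ → M
  | 0 => 1
  | k+1 => cprod F k * F k

lemma ofFn_prod_eq_cprod {M : Type*} [Monoid M] (F : ℕ → M) :
    ∀ n, (List.ofFn fun s : Fin n => F s).prod = cprod F n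
  | 0 => by simp [cprod]
  | n+1 => by
    rw [List.ofFn_succ']
    simp only [List.concat_eq_append, List.prod_append, List.prod_cons, List.prod_nil,
      Fin.coe_castSucc, Fin.val_last, mul_one]
    rw [ofFn_prod_eq_cprod F n]
    rfl

lemma cprod_central {G : Type*} [Ring G] (F : ℕ → G)
    (hc : ∀ k c, F k * c = c * F k) : ∀ k c, cprod F k * c = c * cprod F k
  | 0, c => by simp [cprod]
  | k+1, c => by
    show cprod F k * F k * c = c * (cprod F k * F k)
    rw [mul_assoc, hc k c, ← mul_assoc, cprod_central F hc k c, mul_assoc]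

lemma half_formula (F : Type*) [Field F] (G H : Type*) [Ring G] [Ring H]
    [Algebra F G] [Algebra F H]
    (hG : ∀ g1 g2 g3 : G, (g1 * g2 - g2 * g1) * g3 - g3 * (g1 * g2 - g2 * g1) = 0)
    (hH : ∀ h1 h2 h3 : H, (h1 * h2 - h2 * h1) * h3 - h3 * (h1 * h2 - h2 * h1) = 0)
    (m' : ℕ) (hm : 1 ≤ m') (g : ℕ → G) (h : ℕ → H) (v : ℕ → TensorProduct F G H)
    (hv1 : v 1 = (g 1) ⊗ₜ[F] (1 : H))
    (hvi : ∀ i, 2 ≤ i → i ≤ 2 * m' - 1 → v i = (g i) ⊗ₜ[F] (h i))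
    (hvlast : v (2 * m') = (g (2 * m')) ⊗ₜ[F] (1 : H)) :
    lnc (v 1) (List.ofFn fun i : Fin (2 * m' - 1) => v (i + 2)) =
      (cprod (fun s => g (2*s+1) * g (2*s+2) - g (2*s+2) * g (2*s+1)) m') ⊗ₜ[F]
      (cprod (fun s => h (2*s+2) * h (2*s+3) - h (2*s+3) * h (2*s+2)) (m'-1)) := by
  set AG := cprod (fun s => g (2*s+1) * g (2*s+2) - g (2*s+2) * g (2*s+1)) with hAG
  set BH := cprod (fun s => h (2*s+2) * h (2*s+3) - h (2*s+3) * h (2*s+2)) with hBH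
  have cA : ∀ k c, AG k * c = c * AG k := by
    apply cprod_central
    intro k c
    exact sub_eq_zero.mp (hG (g (2*k+1)) (g (2*k+2)) c)
  have cB : ∀ k c, BH k * c = c * BH k := by
    apply cprod_central
    intro k c
    exact sub_eq_zero.mp (hH (h (2*k+2)) (h (2*k+3)) c)
  -- the main claim: state after processing up to odd index 2k+1
  have claim : ∀ k, 2*k+1 ≤ 2*m' - 1 →
      lnc (v 1) (List.ofFn fun i : Fin (2*k) => v (i + 2)) =
        (AG k * g (2*k+1)) ⊗ₜ[F] BH k := by
    intro k
    induction k with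
    | zero =>
      intro _
      simp [lnc, hv1, hAG, hBH, cprod]
    | succ k ih =>
      intro hk
      have hk' : 2*k+1 ≤ 2*m' - 1 := by omega
      have h1 : v (2*k+2) = g (2*k+2) ⊗ₜ[F] h (2*k+2) := hvi _ (by omega) (by omega)
      have h2 : v (2*k+3) = g (2*k+3) ⊗ₜ[F] h (2*k+3) := hvi _ (by omega) (by omega)
      have e : (List.ofFn fun i : Fin (2*(k+1)) => v (i + 2)) =
          ((List.ofFn fun i : Fin (2*k) => v (i + 2)).concat (v (2*k+2))).concat (v (2*k+3)) := by
        have h3 : 2*(k+1) = (2*k+1)+1 := by ring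
        rw [h3, List.ofFn_succ']
        simp only [Fin.coe_castSucc, Fin.val_last]
        rw [List.ofFn_succ']
        simp only [Fin.coe_castSucc, Fin.val_last]
      rw [e, lnc_concat, lnc_concat, ih hk', h1, h2]
      rw [Algebra.TensorProduct.tmul_mul_tmul, Algebra.TensorProduct.tmul_mul_tmul]
      have eg : g (2*k+2) * (AG k * g (2*k+1)) = AG k * (g (2*k+2) * g (2*k+1)) := by
        rw [← mul_assoc, ← cA k, mul_assoc]
      have eh : h (2*k+2) * BH k = BH k * h (2*k+2) := (cB k _).symm
      rw [eg, eh, mul_assoc (AG k) (g (2*k+1)), ← TensorProduct.sub_tmul, ← mul_sub]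
      rw [Algebra.TensorProduct.tmul_mul_tmul, Algebra.TensorProduct.tmul_mul_tmul]
      have hAG1 : AG (k+1) = AG k * (g (2*k+1) * g (2*k+2) - g (2*k+2) * g (2*k+1)) := rfl
      rw [← hAG1]
      have eg2 : g (2*k+3) * AG (k+1) = AG (k+1) * g (2*k+3) := (cA (k+1) _).symm
      have eh2 : h (2*k+3) * (BH k * h (2*k+2)) = BH k * (h (2*k+3) * h (2*k+2)) := by
        rw [← mul_assoc, ← cB k, mul_assoc]
      rw [eg2, eh2, mul_assoc (BH k), ← TensorProduct.tmul_sub, ← mul_sub]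
      have hBH1 : BH (k+1) = BH k * (h (2*k+2) * h (2*k+3) - h (2*k+3) * h (2*k+2)) := rfl
      rw [← hBH1]
      have h4 : 2*(k+1)+1 = 2*k+3 := by ring
      rw [h4]
  -- final step
  obtain ⟨t, rfl⟩ : ∃ t, m' = t + 1 := ⟨m' - 1, by omega⟩
  have e : (List.ofFn fun i : Fin (2*(t+1) - 1) => v (i + 2)) =
      (List.ofFn fun i : Fin (2*t) => v (i + 2)).concat (v (2*(t+1))) := by
    have : 2*(t+1) - 1 = (2*t)+1 := by omega
    rw [this, List.ofFn_succ' (fun i : Fin (2*t+1) => v (i + 2))]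
    simp only [Fin.coe_castSucc, Fin.val_last]
    congr 1
  rw [e, lnc_concat, claim t (by omega), hvlast]
  rw [Algebra.TensorProduct.tmul_mul_tmul, Algebra.TensorProduct.tmul_mul_tmul]
  have eg : g (2*(t+1)) * (AG t * g (2*t+1)) = AG t * (g (2*(t+1)) * g (2*t+1)) := by
    rw [← mul_assoc, ← cA t, mul_assoc]
  rw [eg, mul_one, one_mul, mul_assoc (AG t), ← TensorProduct.sub_tmul, ← mul_sub]
  have h1 : 2*(t+1) = 2*t+2 := by ring
  rw [h1]
  have hAG1 : AG (t+1) = AG t * (g (2*t+1) * g (2*t+2) - g (2*t+2) * g (2*t+1)) := rfl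
  rw [← hAG1]
  norm_num

/-- with `v1 = g1⊗1`, `vi = gi⊗hi` (2 ≤ i ≤ 2m'-1), `v_{2m'} = g_{2m'}⊗1`,
`w1 = g1'⊗1`, `wj = gj'⊗hj'` (2 ≤ j ≤ 2n'-1), `w_{2n'} = g'_{2n'}⊗1`, one has
`[v1,…,v_{2m'}][w1,…,w_{2n'}] = [g1,g2]⋯[g_{2m'-1},g_{2m'}][g1',g2']⋯[g'_{2n'-1},g'_{2n'}]
  ⊗ [h2,h3]⋯[h_{2m'-2},h_{2m'-1}][h2',h3']⋯[h'_{2n'-2},h'_{2n'-1}]`. -/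
theorem tensor_prod_lnc_formula
    (F : Type*) [Field F] (G H : Type*) [Ring G] [Ring H] [Algebra F G] [Algebra F H]
    (hG : ∀ g1 g2 g3 : G, (g1 * g2 - g2 * g1) * g3 - g3 * (g1 * g2 - g2 * g1) = 0)
    (hH : ∀ h1 h2 h3 : H, (h1 * h2 - h2 * h1) * h3 - h3 * (h1 * h2 - h2 * h1) = 0)
    (m' n' : ℕ) (hm : 1 ≤ m') (hn : 1 ≤ n')
    (g g' : ℕ → G) (h h' : ℕ → H)
    (v w : ℕ → TensorProduct F G H)
    (hv1 : v 1 = (g 1) ⊗ₜ[F] (1 : H))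
    (hvi : ∀ i, 2 ≤ i → i ≤ 2 * m' - 1 → v i = (g i) ⊗ₜ[F] (h i))
    (hvlast : v (2 * m') = (g (2 * m')) ⊗ₜ[F] (1 : H))
    (hw1 : w 1 = (g' 1) ⊗ₜ[F] (1 : H))
    (hwj : ∀ j, 2 ≤ j → j ≤ 2 * n' - 1 → w j = (g' j) ⊗ₜ[F] (h' j))
    (hwlast : w (2 * n') = (g' (2 * n')) ⊗ₜ[F] (1 : H)) :
    lnc (v 1) (List.ofFn fun i : Fin (2 * m' - 1) => v (i + 2)) *
      lnc (w 1) (List.ofFn fun j : Fin (2 * n' - 1) => w (j + 2))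
      = ((List.ofFn fun s : Fin m' =>
            g (2 * s + 1) * g (2 * s + 2) - g (2 * s + 2) * g (2 * s + 1)).prod *
         (List.ofFn fun s : Fin n' =>
            g' (2 * s + 1) * g' (2 * s + 2) - g' (2 * s + 2) * g' (2 * s + 1)).prod)
          ⊗ₜ[F]
        ((List.ofFn fun s : Fin (m' - 1) =>
            h (2 * s + 2) * h (2 * s + 3) - h (2 * s + 3) * h (2 * s + 2)).prod *
         (List.ofFn fun s : Fin (n' - 1) =>
            h' (2 * s + 2) * h' (2 * s + 3) - h' (2 * s + 3) * h' (2 * s + 2)).prod) := by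
  rw [half_formula F G H hG hH m' hm g h v hv1 hvi hvlast,
    half_formula F G H hG hH n' hn g' h' w hw1 hwj hwlast,
    Algebra.TensorProduct.tmul_mul_tmul,
    ofFn_prod_eq_cprod (fun s => g (2*s+1) * g (2*s+2) - g (2*s+2) * g (2*s+1)) m',
    ofFn_prod_eq_cprod (fun s => g' (2*s+1) * g' (2*s+2) - g' (2*s+2) * g' (2*s+1)) n',
    ofFn_prod_eq_cprod (fun s => h (2*s+2) * h (2*s+3) - h (2*s+3) * h (2*s+2)) (m'-1),
    ofFn_prod_eq_cprod (fun s => h' (2*s+2) * h' (2*s+3) - h' (2*s+3) * h' (2*s+2)) (n'-1)]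
end

section
/- Let F be a field of characteristic 2, 𝒢 the group generated by yi with yi² = 1 and ((yi,yj),yk) = 1, F𝒢 its group algebra, d_{ij} = (yi,yj) + 1 ∈ F𝒢, and I the two-sided ideal of F𝒢 generated by all elements d_{i1 i2} d_{i3 i4} + d_{i1 i3} d_{i2 i4}. Then [u1, u2, u3] ∈ I for all u1, u2, u3 ∈ F𝒢, i.e. F𝒢/I is Lie nilpotent of class at most 2. -/
/-- The group commutator `(a,b) = a⁻¹ b⁻¹ a b`. -/
def gc {G : Type*} [Group G] (a b : G) : G := a⁻¹ * b⁻¹ * a * b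

/-- The relations `yᵢ² = 1` and `((yᵢ,yⱼ),yₖ) = 1`. -/
def grpRels : Set (FreeGroup ℕ) :=
  (Set.range fun i => FreeGroup.of i ^ 2) ∪
    {x | ∃ i j k, x = gc (gc (FreeGroup.of i) (FreeGroup.of j)) (FreeGroup.of k)}

/-- The group `𝒢` presented by `yᵢ² = 1`, `((yᵢ,yⱼ),yₖ) = 1`. -/
def GrpG : Type := PresentedGroup grpRels

instance : Group GrpG := by unfold GrpG; infer_instance

/-- The generator `yᵢ` of `𝒢`. -/
def yy (i : ℕ) : GrpG := PresentedGroup.of i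

/-- `d_{ij} = (yᵢ,yⱼ) + 1` in the group algebra `F𝒢`. -/
noncomputable def dd (F : Type*) [Field F] (i j : ℕ) : MonoidAlgebra F GrpG :=
  MonoidAlgebra.of F GrpG (gc (yy i) (yy j)) + 1

/-- The two-sided ideal `I` of `F𝒢` generated by all
`d_{i₁i₂} d_{i₃i₄} + d_{i₁i₃} d_{i₂i₄}`. -/
noncomputable def II (F : Type*) [Field F] : TwoSidedIdeal (MonoidAlgebra F GrpG) :=
  TwoSidedIdeal.span
    {x | ∃ i1 i2 i3 i4, x = dd F i1 i2 * dd F i3 i4 + dd F i1 i3 * dd F i2 i4}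

/-!
Commutators in `𝒢` are central and square to one, so `(a, b) = (b, a)` and `b ↦ (a, b)` is a
homomorphism. Hence `δ(a, b) = (a, b) - 1` is symmetric and satisfies
`δ(a, bc) = δ(a, b) δ(a, c) + δ(a, b) + δ(a, c)`, and for group elements
`[g, h, c] = chg · δ(hg, c) δ(g, h)`. Expanding `δ(hg, c)` reduces the theorem to
`δ(a, b) δ(a, c) ∈ I` for all `a, b, c ∈ 𝒢`. The expansion formula propagates such statements from
generators to arbitrary words one letter at a time; the generators of `I` give the base cases
`d_{ij} d_{ik}` (take `i₁ = i₂`) and `d_{ik} d_{jl} + d_{il} d_{jk}`, the second one being needed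
to pass from `δ(yᵢ, b) δ(yᵢ, c) ∈ I` to `δ(yᵢ, a) δ(yⱼ, a) ∈ I`. Trilinearity of `[u₁, u₂, u₃]`
finishes.
-/

section GroupCommutator

variable {G H : Type*} [Group G] [Group H]

lemma map_gc (f : G →* H) (a b : G) : f (gc a b) = gc (f a) (f b) := by
  simp only [gc, map_mul, map_inv]

lemma gc_mul_right_eq_conj (a b c : G) : gc a (b * c) = gc a c * (c⁻¹ * gc a b * c) := by
  simp only [gc]; group

lemma gc_inv (a b : G) : (gc a b)⁻¹ = gc b a := by
  simp only [gc]; group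

lemma commute_of_gc_eq_one {a b : G} (h : gc a b = 1) : Commute a b := by
  rw [gc, mul_assoc, ← mul_inv_rev, inv_mul_eq_one] at h
  exact h.symm

lemma gc_one_right (a : G) : gc a 1 = 1 := by simp [gc]

lemma conj_eq_of_mem_center {z : G} (hz : z ∈ Subgroup.center G) (g : G) : g⁻¹ * z * g = z := by
  rw [mul_assoc, ← Subgroup.mem_center_iff.mp hz g, inv_mul_cancel_left]

end GroupCommutator

lemma yy_mul_self (i : ℕ) : yy i * yy i = 1 := by
  have h := PresentedGroup.one_of_mem (rels := grpRels) (Or.inl ⟨i, rfl⟩)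
  rwa [map_pow, pow_two] at h

lemma inv_yy (i : ℕ) : (yy i)⁻¹ = yy i := inv_eq_of_mul_eq_one_right (yy_mul_self i)

lemma gc_gc_yy (i j k : ℕ) : gc (gc (yy i) (yy j)) (yy k) = 1 := by
  have h := PresentedGroup.one_of_mem (rels := grpRels) (Or.inr ⟨i, j, k, rfl⟩)
  rwa [map_gc, map_gc] at h

lemma submonoidClosure_range_yy : Submonoid.closure (Set.range yy) = ⊤ := by
  have hinv : (Set.range yy)⁻¹ = Set.range yy := by simp only [Set.inv_range, inv_yy]
  have hgen : Subgroup.closure (Set.range yy) = ⊤ := PresentedGroup.closure_range_of grpRels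
  rw [← Subgroup.top_toSubmonoid, ← hgen, Subgroup.closure_toSubmonoid, hinv, Set.union_self]

@[elab_as_elim]
lemma GrpG.induction_on {motive : GrpG → Prop} (g : GrpG) (one : motive 1)
    (yy_mul : ∀ i g, motive g → motive (yy i * g)) : motive g :=
  Submonoid.induction_of_closure_eq_top_left submonoidClosure_range_yy g one
    (by rintro _ ⟨i, rfl⟩; exact yy_mul i)

lemma mem_center_of_forall_commute_yy {z : GrpG} (h : ∀ i, Commute (yy i) z) :
    z ∈ Subgroup.center GrpG := by
  refine Subgroup.mem_center_iff.mpr fun g => ?_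
  induction g using GrpG.induction_on with
  | one => exact (Commute.one_left z).eq
  | yy_mul i g ih => exact ((h i).mul_left ih).eq

lemma gc_mem_center_of_forall_yy {a : GrpG} (h : ∀ j, gc a (yy j) ∈ Subgroup.center GrpG)
    (b : GrpG) : gc a b ∈ Subgroup.center GrpG := by
  induction b using GrpG.induction_on with
  | one => rw [gc_one_right]; exact one_mem _
  | yy_mul j g ih =>
    rw [gc_mul_right_eq_conj, conj_eq_of_mem_center (h j)]
    exact mul_mem ih (h j)

lemma gc_mem_center (a b : GrpG) : gc a b ∈ Subgroup.center GrpG := by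
  have hgen (i j : ℕ) : gc (yy i) (yy j) ∈ Subgroup.center GrpG :=
    mem_center_of_forall_commute_yy fun k => (commute_of_gc_eq_one (gc_gc_yy i j k)).symm
  have hleft (i : ℕ) (b : GrpG) : gc (yy i) b ∈ Subgroup.center GrpG :=
    gc_mem_center_of_forall_yy (hgen i) b
  exact gc_mem_center_of_forall_yy (fun j => gc_inv (yy j) a ▸ inv_mem (hleft j a)) b

lemma commute_gc (a b c d : GrpG) : Commute (gc a b) (gc c d) :=
  Subgroup.mem_center_iff.mp (gc_mem_center c d) (gc a b)

lemma gc_mul_right (a b c : GrpG) : gc a (b * c) = gc a b * gc a c := by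
  rw [gc_mul_right_eq_conj, conj_eq_of_mem_center (gc_mem_center a b)]
  exact (commute_gc a c a b).eq

lemma gc_mul_self (a b : GrpG) : gc a b * gc a b = 1 := by
  induction b using GrpG.induction_on with
  | one => rw [gc_one_right, mul_one]
  | yy_mul j g ih =>
    rw [gc_mul_right, (commute_gc a g a (yy j)).mul_mul_mul_comm, ← gc_mul_right, yy_mul_self,
      gc_one_right, ih, mul_one]

lemma gc_comm (a b : GrpG) : gc a b = gc b a := by
  rw [← gc_inv a b, inv_eq_of_mul_eq_one_right (gc_mul_self a b)]

open MonoidAlgebra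

section LieOfAssociative

attribute [local instance] LieRing.ofAssociativeRing

theorem MonoidAlgebra.lie_lie_mem_of_forall_of {k G : Type*} [CommRing k] [Monoid G]
    {I : TwoSidedIdeal (MonoidAlgebra k G)}
    (h : ∀ a b c : G, ⁅⁅of k G a, of k G b⁆, of k G c⁆ ∈ I) (x y z : MonoidAlgebra k G) :
    ⁅⁅x, y⁆, z⁆ ∈ I := by
  have smul_mem (r : k) {w : MonoidAlgebra k G} (hw : w ∈ I) : r • w ∈ I := by
    rw [Algebra.smul_def]; exact I.mul_mem_left _ _ hw
  induction x using MonoidAlgebra.induction_on with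
  | add x x' hx hx' => rw [add_lie, add_lie]; exact add_mem hx hx'
  | smul r x hx => rw [smul_lie, smul_lie]; exact smul_mem r hx
  | of a =>
    induction y using MonoidAlgebra.induction_on with
    | add y y' hy hy' => rw [lie_add, add_lie]; exact add_mem hy hy'
    | smul r y hy => rw [lie_smul, smul_lie]; exact smul_mem r hy
    | of b =>
      induction z using MonoidAlgebra.induction_on with
      | add z z' hz hz' => rw [lie_add]; exact add_mem hz hz'
      | smul r z hz => rw [lie_smul]; exact smul_mem r hz
      | of c => exact h a b c

end LieOfAssociative

/-- With `- 1` in place of the `+ 1` of `dd`, the expansion identities below hold in every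
characteristic; in characteristic 2 the two agree (`dd_eq_delta`). -/
noncomputable def delta (k : Type*) [CommRing k] {G : Type*} [Group G] (a b : G) :
    MonoidAlgebra k G :=
  of k G (gc a b) - 1

section Delta

variable (k : Type*) [CommRing k]

lemma lie_of_of {G : Type*} [Group G] (g h : G) :
    ⁅of k G g, of k G h⁆ = of k G (h * g) * delta k g h := by
  rw [Ring.lie_def, delta, mul_sub, mul_one, ← map_mul, ← map_mul, ← map_mul, gc]
  congr 2; group

lemma delta_self {G : Type*} [Group G] (a : G) : delta k a a = 0 := by
  rw [delta, show gc a a = 1 by simp [gc], map_one, sub_self]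

lemma delta_one_right {G : Type*} [Group G] (a : G) : delta k a 1 = 0 := by
  rw [delta, gc_one_right, map_one, sub_self]

lemma delta_comm (a b : GrpG) : delta k a b = delta k b a := by rw [delta, delta, gc_comm]

lemma delta_mul_right (a b c : GrpG) :
    delta k a (b * c) = delta k a b * delta k a c + delta k a b + delta k a c := by
  simp only [delta, gc_mul_right, map_mul]; noncomm_ring

lemma delta_mul_left (a b c : GrpG) :
    delta k (a * b) c = delta k a c * delta k b c + delta k a c + delta k b c := by
  simp only [delta_comm k _ c, delta_mul_right]

lemma commute_delta (a b : GrpG) (x : MonoidAlgebra k GrpG) : Commute (delta k a b) x :=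
  (of_commute (fun g => (Subgroup.mem_center_iff.mp (gc_mem_center a b) g).symm) x).sub_left
    (Commute.one_left x)

lemma lie_lie_of_of_of (g h c : GrpG) :
    ⁅⁅of k GrpG g, of k GrpG h⁆, of k GrpG c⁆
      = of k GrpG (c * (h * g)) * (delta k (h * g) c * delta k g h) := by
  rw [lie_of_of, Ring.lie_def, mul_assoc, (commute_delta k g h _).eq, ← mul_assoc, ← mul_assoc,
    ← sub_mul, ← Ring.lie_def, lie_of_of, mul_assoc]

end Delta

section Ideal

variable (F : Type*) [Field F]

local notation "δ" => delta F

lemma dd_eq_delta [CharP F 2] (i j : ℕ) : dd F i j = δ (yy i) (yy j) := by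
  have hneg : (-1 : MonoidAlgebra F GrpG) = 1 := by
    rw [← map_one (algebraMap F (MonoidAlgebra F GrpG)), ← map_neg, CharTwo.neg_eq]
  rw [dd, delta, sub_eq_add_neg, hneg]

lemma delta_yy_mul_delta_yy_add_mem [CharP F 2] (i j k l : ℕ) :
    δ (yy i) (yy j) * δ (yy k) (yy l) + δ (yy i) (yy k) * δ (yy j) (yy l) ∈ II F := by
  rw [← dd_eq_delta, ← dd_eq_delta, ← dd_eq_delta, ← dd_eq_delta]
  exact TwoSidedIdeal.subset_span ⟨i, j, k, l, rfl⟩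

lemma delta_yy_yy_mul_delta_yy_yy_mem [CharP F 2] (i j k : ℕ) :
    δ (yy i) (yy j) * δ (yy i) (yy k) ∈ II F := by
  simpa only [delta_self, zero_mul, zero_add] using delta_yy_mul_delta_yy_add_mem F i i j k

lemma delta_mul_mem_of_forall_yy (a : GrpG) {x : MonoidAlgebra F GrpG}
    (h : ∀ i, δ a (yy i) * x ∈ II F) (b : GrpG) : δ a b * x ∈ II F := by
  induction b using GrpG.induction_on with
  | one => rw [delta_one_right, zero_mul]; exact zero_mem _
  | yy_mul i g ih =>
    rw [delta_mul_right, add_mul, add_mul, mul_assoc]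
    exact add_mem (add_mem ((II F).mul_mem_left _ _ ih) (h i)) ih

lemma delta_yy_mul_delta_yy_mem [CharP F 2] (i : ℕ) (b c : GrpG) :
    δ (yy i) b * δ (yy i) c ∈ II F := by
  refine delta_mul_mem_of_forall_yy F _ (fun j => ?_) b
  rw [(commute_delta F _ _ _).eq]
  exact delta_mul_mem_of_forall_yy F _ (fun k => delta_yy_yy_mul_delta_yy_yy_mem F i k j) c

lemma delta_yy_mul_delta_yy_add_swap_mem_of_forall_yy [CharP F 2] (i j : ℕ) (c : GrpG)
    (h : ∀ l, δ (yy i) (yy l) * δ (yy j) c + δ (yy i) c * δ (yy j) (yy l) ∈ II F) (b : GrpG) :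
    δ (yy i) b * δ (yy j) c + δ (yy i) c * δ (yy j) b ∈ II F := by
  induction b using GrpG.induction_on with
  | one => rw [delta_one_right, delta_one_right, zero_mul, mul_zero, add_zero]; exact zero_mem _
  | yy_mul l g ih =>
    have e : δ (yy i) (yy l * g) * δ (yy j) c + δ (yy i) c * δ (yy j) (yy l * g) =
        (δ (yy i) (yy l) * δ (yy j) c + δ (yy i) c * δ (yy j) (yy l))
          + (δ (yy i) g * δ (yy j) c + δ (yy i) c * δ (yy j) g)
          + δ (yy i) (yy l) * δ (yy i) g * δ (yy j) c
          + δ (yy i) c * (δ (yy j) (yy l) * δ (yy j) g) := by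
      rw [delta_mul_right, delta_mul_right]; noncomm_ring
    rw [e]
    exact add_mem (add_mem (add_mem (h l) ih)
      ((II F).mul_mem_right _ _ (delta_yy_mul_delta_yy_mem F i _ _)))
      ((II F).mul_mem_left _ _ (delta_yy_mul_delta_yy_mem F j _ _))

lemma delta_yy_mul_delta_yy_add_swap_mem [CharP F 2] (i j : ℕ) (b c : GrpG) :
    δ (yy i) b * δ (yy j) c + δ (yy i) c * δ (yy j) b ∈ II F := by
  refine delta_yy_mul_delta_yy_add_swap_mem_of_forall_yy F i j c (fun k => ?_) b
  rw [add_comm]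
  refine delta_yy_mul_delta_yy_add_swap_mem_of_forall_yy F i j (yy k) (fun l => ?_) c
  simpa only [delta_comm F (yy k) (yy j), delta_comm F (yy l) (yy j)]
    using delta_yy_mul_delta_yy_add_mem F i l k j

lemma delta_yy_mul_delta_yy_same_mem [CharP F 2] (i j : ℕ) (a : GrpG) :
    δ (yy i) a * δ (yy j) a ∈ II F := by
  induction a using GrpG.induction_on with
  | one => rw [delta_one_right, zero_mul]; exact zero_mem _
  | yy_mul k g ih =>
    have hAC : δ (yy i) (yy k) * δ (yy j) (yy k) ∈ II F := by
      simpa only [delta_comm F (yy k)] using delta_yy_yy_mul_delta_yy_yy_mem F k i j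
    have hAB := delta_yy_mul_delta_yy_mem F i (yy k) g
    have hCD := delta_yy_mul_delta_yy_mem F j (yy k) g
    have hAD_BC := delta_yy_mul_delta_yy_add_swap_mem F i j (yy k) g
    rw [delta_mul_right, delta_mul_right]
    set A := δ (yy i) (yy k)
    set B := δ (yy i) g
    set C := δ (yy j) (yy k)
    set D := δ (yy j) g
    have e : (A * B + A + B) * (C * D + C + D) =
        A * B * (C * D + C + D) + A * (C * D) + B * (C * D) + A * C + (A * D + B * C) + B * D := by
      noncomm_ring
    rw [e]
    exact add_mem (add_mem (add_mem (add_mem (add_mem ((II F).mul_mem_right _ _ hAB)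
      ((II F).mul_mem_left _ _ hCD)) ((II F).mul_mem_left _ _ hCD)) hAC) hAD_BC) ih

lemma delta_mul_delta_mem [CharP F 2] (a b c : GrpG) : δ a b * δ a c ∈ II F := by
  refine delta_mul_mem_of_forall_yy F a (fun i => ?_) b
  rw [(commute_delta F _ _ _).eq]
  refine delta_mul_mem_of_forall_yy F a (fun j => ?_) c
  rw [delta_comm F a, delta_comm F a]
  exact delta_yy_mul_delta_yy_same_mem F j i a

lemma lie_lie_of_of_of_mem [CharP F 2] (g h c : GrpG) :
    ⁅⁅of F GrpG g, of F GrpG h⁆, of F GrpG c⁆ ∈ II F := by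
  have hg := delta_mul_delta_mem F g c h
  have hh : δ h c * δ g h ∈ II F := by
    simpa only [delta_comm F g h] using delta_mul_delta_mem F h c g
  rw [lie_lie_of_of_of, delta_mul_left, add_mul, add_mul, mul_assoc]
  exact (II F).mul_mem_left _ _ (add_mem (add_mem ((II F).mul_mem_left _ _ hg) hh) hg)

end Ideal

/-- over a field of characteristic 2, `[u1,u2,u3] ∈ I` for all
`u1, u2, u3 ∈ F𝒢`, i.e. `F𝒢/I` is Lie nilpotent of class at most 2. -/
theorem groupAlgebra_lnc_mem_ideal
    (F : Type*) [Field F] [CharP F 2] :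
    ∀ u1 u2 u3 : MonoidAlgebra F GrpG,
      (u1 * u2 - u2 * u1) * u3 - u3 * (u1 * u2 - u2 * u1) ∈ II F :=
  MonoidAlgebra.lie_lie_mem_of_forall_of (lie_lie_of_of_of_mem F)
end
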